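/- Let Σ ⊂ ℝ³ be a compact embedded minimal surface contained in the slab {|x₃| ≤ 2β_A h}, and let Π : ℝ³ → ℝ² denote vertical projection Π(x₁,x₂,x₃) = (x₁,x₂). If E is an unbounded connected component of ℝ² ∖ T_{h/4}(Π(∂Σ)), then Π(Σ) ∩ E = ∅. -/

import Mathlib

open Real Set Pointwise Metric

noncomputable section

abbrev R3 := EuclideanSpace ℝ (Fin 3)
abbrev R2 := EuclideanSpace ℝ (Fin 2)

/-- The point `(a, b, c) ∈ ℝ³`. -/
def toR3 (a b c : ℝ) : R3 := (WithLp.equiv 2 (Fin 3 → ℝ)).symm ![a, b, c]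

/-- Vertical projection `Π : ℝ³ → ℝ²`. -/
def pr (x : R3) : R2 := (WithLp.equiv 2 (Fin 2 → ℝ)).symm ![x 0, x 1]

/-- The `i`-th coordinate direction of `ℝ²`. -/
def e2 (i : Fin 2) : R2 := EuclideanSpace.single i 1

/-- `u` satisfies the minimal surface equation
`(1 + u_y²) u_xx − 2 u_x u_y u_xy + (1 + u_x²) u_yy = 0` on `Ω`, and is `C²` there. -/
def SatisfiesMSE (u : R2 → ℝ) (Ω : Set R2) : Prop :=
  ∀ p ∈ Ω, ContDiffAt ℝ 2 u p ∧
    (1 + fderiv ℝ u p (e2 1) ^ 2) * fderiv ℝ (fun q => fderiv ℝ u q (e2 0)) p (e2 0)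
      - 2 * fderiv ℝ u p (e2 0) * fderiv ℝ u p (e2 1) *
          fderiv ℝ (fun q => fderiv ℝ u q (e2 0)) p (e2 1)
      + (1 + fderiv ℝ u p (e2 0) ^ 2) *
          fderiv ℝ (fun q => fderiv ℝ u q (e2 1)) p (e2 1) = 0

/-- `S` is a minimal surface with boundary `bd`: near every non-boundary point, after a
rigid rotation, `S` coincides with the graph of a solution of the minimal surface
equation. -/
def IsMinimalSurface (S bd : Set R3) : Prop :=
  bd ⊆ S ∧ ∀ z ∈ S \ bd, ∃ (Q : R3 ≃ₗᵢ[ℝ] R3) (ε : ℝ) (u : R2 → ℝ), 0 < ε ∧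
    SatisfiesMSE u (ball (pr (Q z)) ε) ∧
    (Q '' S) ∩ {x : R3 | dist (pr x) (pr (Q z)) < ε ∧ |x 2 - (Q z) 2| < ε} =
      {x : R3 | pr x ∈ ball (pr (Q z)) ε ∧ x = toR3 (x 0) (x 1) (u (pr x)) ∧
        |x 2 - (Q z) 2| < ε}

/-- `S` is graphical at `z`: near `z` it lies on the graph of a differentiable function
of `(x₁, x₂)`; equivalently the tangent plane at `z` is not vertical. -/
def GraphicalAt (S : Set R3) (z : R3) : Prop :=
  ∃ ε > 0, ∃ u : R2 → ℝ, DifferentiableOn ℝ u (ball (pr z) ε) ∧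
    ∀ x ∈ S ∩ ball z ε, x 2 = u (pr x)

/-- The unique positive solution `t₀` of `cosh t = t · sinh t`. -/
def tcrit : ℝ := sInf {t | 0 < t ∧ Real.cosh t ≤ t * Real.sinh t}

/-- `sin² θ₀` for the critical catenoid cone angle `θ₀`. -/
def sinSqθ₀ : ℝ := tcrit ^ 2 / (tcrit ^ 2 + Real.cosh tcrit ^ 2)

/-- The middle portion of the unit vertical catenoid centered at `y`. -/
def Cat0At (y : R3) : Set R3 :=
  {x | Real.cosh (x 2 - y 2) ^ 2 = (x 0 - y 0) ^ 2 + (x 1 - y 1) ^ 2 ∧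
    |x 2 - y 2| < tcrit}

/-- The open solid double cone `N_{θ₀}(y)` of critical angle centered at `y`. -/
def Ncone (y : R3) : Set R3 := {x | x ≠ y ∧ (x 2 - y 2) ^ 2 < dist x y ^ 2 * sinSqθ₀}

/-- The catenoid-foliation function `f_y` centered at `y`: `y + (x−y)/f_y(x) ∈ Cat₀(y)`. -/
def fCat (y x : R3) : ℝ := sInf {l | 0 < l ∧ y + l⁻¹ • (x - y) ∈ Cat0At y}

/-- The open tubular neighborhood of radius `r` of a set. -/
def Tub (r : ℝ) {α : Type*} [PseudoEMetricSpace α] (s : Set α) : Set α :=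
  Metric.thickening r s


-- ========== auxiliary lemmas ==========

theorem toR3_apply0 (a b c : ℝ) : toR3 a b c 0 = a := rfl
theorem toR3_apply1 (a b c : ℝ) : toR3 a b c 1 = b := rfl
theorem toR3_apply2 (a b c : ℝ) : toR3 a b c 2 = c := rfl
theorem pr_apply0 (x : R3) : pr x 0 = x 0 := rfl
theorem pr_apply1 (x : R3) : pr x 1 = x 1 := rfl

theorem pr_toR3 (a b c : ℝ) (q : R2) (h0 : q 0 = a) (h1 : q 1 = b) :
    pr (toR3 a b c) = q := by
  ext i; fin_cases i <;> simp [toR3, pr, h0, h1]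

theorem dist_pr_sq (x : R3) (y : R2) :
    dist (pr x) y ^ 2 = (x 0 - y 0)^2 + (x 1 - y 1)^2 := by
  rw [EuclideanSpace.dist_eq, Real.sq_sqrt (by positivity)]
  simp [pr, Real.dist_eq, Fin.sum_univ_two, sq_abs]

theorem dist_R3_sq (x y : R3) :
    dist x y ^ 2 = (x 0 - y 0)^2 + (x 1 - y 1)^2 + (x 2 - y 2)^2 := by
  rw [EuclideanSpace.dist_eq, Real.sq_sqrt (by positivity)]
  simp [Real.dist_eq, Fin.sum_univ_three, sq_abs]

def cF (h z : ℝ) : ℝ := (3*h/16) * Real.cosh (6*z/h)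
def Fb (h : ℝ) (c : R2) (x : R3) : ℝ :=
  (x 0 - c 0)^2 + (x 1 - c 1)^2 - (cF h (x 2))^2

theorem Fb_dist (h : ℝ) (c : R2) (x : R3) :
    Fb h c x = dist (pr x) c ^ 2 - cF h (x 2)^2 := by
  unfold Fb; rw [dist_pr_sq]

theorem hasDerivAt_cF (h : ℝ) (z : ℝ) :
    HasDerivAt (cF h) ((9/8) * Real.sinh (6*z/h)) z := by
  rcases eq_or_ne h 0 with rfl | hh
  · have he : cF 0 = fun _ => 0 := by funext z; simp [cF]
    rw [he]; simpa using (hasDerivAt_const z (0:ℝ))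
  · have h1 : HasDerivAt (fun z : ℝ => 6*z/h) (6/h) z := by
      simpa using ((hasDerivAt_id z).const_mul 6).div_const h
    have h2 := (Real.hasDerivAt_cosh (6*z/h)).comp z h1
    have h3 := h2.const_mul (3*h/16)
    exact h3.congr_deriv (by field_simp; ring)

theorem hasDerivAt_sF (h : ℝ) (hh : h ≠ 0) (z : ℝ) :
    HasDerivAt (fun z => (9/8) * Real.sinh (6*z/h)) ((27/(4*h)) * Real.cosh (6*z/h)) z := by
  have h1 : HasDerivAt (fun z : ℝ => 6*z/h) (6/h) z := by
    simpa using ((hasDerivAt_id z).const_mul 6).div_const h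
  have h2 := (Real.hasDerivAt_sinh (6*z/h)).comp z h1
  have h3 := h2.const_mul (9/8)
  exact h3.congr_deriv (by field_simp; ring)

theorem exp34_lt : Real.exp (3/4) < 2.12 := by
  have h4 : Real.exp (3/4) ^ (4:ℕ) = Real.exp 3 := by
    rw [← Real.exp_nat_mul]; norm_num
  have h3 : Real.exp 3 < 2.12 ^ (4:ℕ) := by
    calc Real.exp 3 = (Real.exp 1)^(3:ℕ) := by rw [← Real.exp_nat_mul]; norm_num
    _ < 2.7182818286^(3:ℕ) := by
        gcongr
        exact_mod_cast Real.exp_one_lt_d9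
    _ < 2.12 ^ (4:ℕ) := by norm_num
  exact lt_of_pow_lt_pow_left₀ 4 (by norm_num) (h4 ▸ h3)

theorem exp34_gt : 2 < Real.exp (3/4) := by
  have h4 : Real.exp (3/4) ^ (4:ℕ) = Real.exp 3 := by
    rw [← Real.exp_nat_mul]; norm_num
  have h3 : (2:ℝ)^(4:ℕ) < Real.exp 3 := by
    calc (2:ℝ)^(4:ℕ) = 16 := by norm_num
    _ < 2.7182818283^(3:ℕ) := by norm_num
    _ < (Real.exp 1)^(3:ℕ) := by
        gcongr
        exact_mod_cast Real.exp_one_gt_d9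
    _ = Real.exp 3 := by rw [← Real.exp_nat_mul]; norm_num
  exact lt_of_pow_lt_pow_left₀ 4 (Real.exp_pos _).le (h4.symm ▸ h3)

theorem cosh34_lt : Real.cosh (3/4) < 4/3 := by
  rw [Real.cosh_eq]
  have h1 := exp34_lt
  have h2 := exp34_gt
  rw [Real.exp_neg]
  have : (Real.exp (3/4))⁻¹ < 1/2 := by
    rw [inv_lt_comm₀ (by positivity) (by norm_num)]; linarith
  linarith

theorem cosh_le_of_le {t b : ℝ} (hb : |t| ≤ b) : Real.cosh t ≤ Real.cosh b := by
  rw [Real.cosh_le_cosh]; rwa [abs_of_nonneg (le_trans (abs_nonneg t) hb)]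

theorem cF_lt (h βA z : ℝ) (hh : 0 < h) (hβA : 0 < βA) (hβA16 : βA < 1/16)
    (hz : |z| ≤ 2 * βA * h) : cF h z < h/4 := by
  have harg : |6*z/h| ≤ 3/4 := by
    rw [abs_div, abs_of_pos hh, div_le_iff₀ hh, abs_mul]
    simp only [abs_of_nonneg (by norm_num : (0:ℝ) ≤ 6)]
    calc 6 * |z| ≤ 6 * (2*βA*h) := by
          apply mul_le_mul_of_nonneg_left hz; norm_num
    _ ≤ 3/4 * h := by nlinarith
  have h1 := cosh_le_of_le harg
  have h2 := cosh34_lt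
  unfold cF
  nlinarith [Real.one_le_cosh (6*z/h)]

theorem cF_pos (h z : ℝ) (hh : 0 < h) : 0 < cF h z := by
  unfold cF; nlinarith [Real.one_le_cosh (6*z/h)]

theorem sd_test (g g' : ℝ → ℝ) (c2 : ℝ) (hmin : IsLocalMin g 0)
    (h1 : ∀ᶠ t in nhds 0, HasDerivAt g (g' t) t) (h2 : HasDerivAt g' c2 0) :
    0 ≤ c2 := by
  by_contra hneg
  push_neg at hneg
  have hg'0 : g' 0 = 0 := hmin.hasDerivAt_eq_zero h1.self_of_nhds
  have hslope : Filter.Tendsto (fun t => g' t / t) (nhdsWithin 0 {(0:ℝ)}ᶜ) (nhds c2) := by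
    have h := hasDerivAt_iff_tendsto_slope.1 h2
    have heq : (fun t => g' t / t) = slope g' 0 := by
      funext t; rw [slope_def_field, hg'0]; ring_nf
    rw [heq]; exact h
  have hev : ∀ᶠ t in nhdsWithin 0 (Ioi (0:ℝ)), g' t < 0 := by
    have hlt : ∀ᶠ t in nhdsWithin 0 {(0:ℝ)}ᶜ, g' t / t < c2/2 := by
      apply hslope.eventually_lt tendsto_const_nhds; linarith
    have hsub : nhdsWithin 0 (Ioi (0:ℝ)) ≤ nhdsWithin 0 {(0:ℝ)}ᶜ := by
      apply nhdsWithin_mono; intro x hx; exact (ne_of_gt hx)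
    filter_upwards [hsub hlt, self_mem_nhdsWithin] with t ht ht0
    have htpos : (0:ℝ) < t := ht0
    have := (div_lt_iff₀ htpos).1 ht
    nlinarith
  rcases Metric.eventually_nhds_iff.1 h1 with ⟨d1, hd1, H1⟩
  rcases Metric.eventually_nhds_iff.1 hmin with ⟨d2, hd2, H2⟩
  rcases Metric.eventually_nhds_iff.1 (eventually_nhdsWithin_iff.1 hev) with ⟨d3, hd3, H3⟩
  set t0 : ℝ := min (min d1 d2) d3 / 2 with ht0def
  have ht0pos : 0 < t0 := by positivity
  have ht0lt1 : t0 < d1 := by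
    have h := min_le_left (min d1 d2) d3
    have h' := min_le_left d1 d2
    nlinarith
  have ht0lt2 : t0 < d2 := by
    have h := min_le_left (min d1 d2) d3
    have h' := min_le_right d1 d2
    nlinarith
  have ht0lt3 : t0 < d3 := by
    have h := min_le_right (min d1 d2) d3
    nlinarith
  have hderiv : ∀ s ∈ Set.Icc (0:ℝ) t0, HasDerivAt g (g' s) s := by
    intro s hs
    apply H1
    rw [Real.dist_eq, sub_zero, abs_of_nonneg hs.1]
    exact lt_of_le_of_lt hs.2 ht0lt1
  have hcont : ContinuousOn g (Set.Icc (0:ℝ) t0) := fun s hs =>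
    ((hderiv s hs).continuousAt).continuousWithinAt
  obtain ⟨c, hc, hcder⟩ := exists_hasDerivAt_eq_slope g g' ht0pos hcont
    (fun s hs => hderiv s ⟨hs.1.le, hs.2.le⟩)
  have hgc : g' c < 0 := by
    apply H3 (y := c)
    · rw [Real.dist_eq, sub_zero, abs_of_nonneg hc.1.le]
      exact lt_trans hc.2 ht0lt3
    · exact hc.1
  have hge : g 0 ≤ g t0 := by
    apply H2
    rw [Real.dist_eq, sub_zero, abs_of_nonneg ht0pos.le]
    exact ht0lt2
  rw [hcder] at hgc
  have h5 : (g t0 - g 0) / (t0 - 0) ≥ 0 := by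
    apply div_nonneg; linarith; linarith
  linarith

set_option maxHeartbeats 2000000 in
theorem touching (h βA : ℝ) (hh : 0 < h)
    (S bd : Set R3) (hmin : IsMinimalSurface S bd)
    (p' : R2)
    (hge : ∀ x ∈ S, 0 ≤ Fb h p' x)
    (w : R3) (hw : w ∈ S) (hwbd : w ∉ bd) (h0 : Fb h p' w = 0) : False := by
  have hne : h ≠ 0 := ne_of_gt hh
  obtain ⟨Q, ε, u, hε, hMSE, hCE⟩ := hmin.2 w ⟨hw, hwbd⟩
  set p₀ : R2 := pr (Q w) with hp₀def
  -- Q w is on the graph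
  have hQwL : Q w ∈ (Q '' S) ∩ {x : R3 | dist (pr x) (pr (Q w)) < ε ∧ |x 2 - (Q w) 2| < ε} := by
    refine ⟨⟨w, hw, rfl⟩, ?_, ?_⟩
    · rw [dist_self]; exact hε
    · rw [sub_self, abs_zero]; exact hε
  rw [hCE] at hQwL
  have hgraphQw : Q w = toR3 ((Q w) 0) ((Q w) 1) (u (pr (Q w))) := hQwL.2.1
  have hu0 : u p₀ = (Q w) 2 := by
    have h2 := congrArg (fun x : R3 => x 2) hgraphQw
    simp only [toR3_apply2] at h2
    exact h2.symm
  -- rows of the rotation matrix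
  set r : Fin 3 → Fin 3 → ℝ := fun i j => (Q (EuclideanSpace.single i 1)) j with hrdef
  have hQsc : ∀ (x : R3) (i : Fin 3), (Q.symm x) i =
      x 0 * r i 0 + x 1 * r i 1 + x 2 * r i 2 := by
    intro x i
    have h1 : (Q.symm x) i = (inner ℝ (Q.symm x) (EuclideanSpace.single i (1:ℝ)) : ℝ) := by
      simp [EuclideanSpace.inner_single_right]
    have h2 : (inner ℝ (Q.symm x) (EuclideanSpace.single i (1:ℝ)) : ℝ)
        = inner ℝ x (Q (EuclideanSpace.single i 1)) := by
      rw [← Q.inner_map_map (Q.symm x) _, Q.apply_symm_apply]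
    rw [h1, h2, hrdef]
    simp [PiLp.inner_apply, Fin.sum_univ_three, RCLike.inner_apply, mul_comm]
  have hrow : ∀ i k, r i 0 * r k 0 + r i 1 * r k 1 + r i 2 * r k 2
      = if i = k then 1 else 0 := by
    intro i k
    have h2 : (inner ℝ (Q (EuclideanSpace.single i (1:ℝ))) (Q (EuclideanSpace.single k 1)) : ℝ)
        = inner ℝ (EuclideanSpace.single i (1:ℝ)) (EuclideanSpace.single k (1:ℝ)) :=
      Q.inner_map_map _ _
    rw [PiLp.inner_apply] at h2
    simp only [RCLike.inner_apply, conj_trivial, Fin.sum_univ_three] at h2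
    have h3 : (inner ℝ (EuclideanSpace.single i (1:ℝ)) (EuclideanSpace.single k (1:ℝ)) : ℝ)
        = if i = k then 1 else 0 := by
      simp [EuclideanSpace.inner_single_left, EuclideanSpace.single_apply]
    rw [h3] at h2
    simp only [hrdef]
    linarith [h2]
  have hcol : ∀ j l, r 0 j * r 0 l + r 1 j * r 1 l + r 2 j * r 2 l
      = if j = l then 1 else 0 := by
    have hM : (Matrix.of r) * (Matrix.of r).transpose = (1 : Matrix (Fin 3) (Fin 3) ℝ) := by
      ext i k
      simp only [Matrix.mul_apply, Matrix.transpose_apply, Matrix.of_apply, Fin.sum_univ_three,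
        Matrix.one_apply]
      exact hrow i k
    have hM2 := mul_eq_one_comm.1 hM
    intro j l
    have h4 := congrFun (congrFun hM2 j) l
    simp only [Matrix.mul_apply, Matrix.transpose_apply, Matrix.of_apply, Fin.sum_univ_three,
      Matrix.one_apply] at h4
    linarith [h4]
  -- analytic facts about u
  have hball : p₀ ∈ ball p₀ ε := mem_ball_self hε
  have hC2 : ContDiffAt ℝ 2 u p₀ := (hMSE p₀ hball).1
  have hPDE := (hMSE p₀ hball).2
  have hudiff : ∀ q ∈ ball p₀ ε, DifferentiableAt ℝ u q := fun q hq =>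
    ((hMSE q hq).1).differentiableAt (by norm_num)
  set du := fderiv ℝ u p₀ with hdudef
  set f'' := fderiv ℝ (fderiv ℝ u) p₀ with hf''def
  have hdf : DifferentiableAt ℝ (fderiv ℝ u) p₀ :=
    ((hC2.fderiv_right (m := 1) (by norm_num)).differentiableAt one_ne_zero)
  have hf'' : HasFDerivAt (fderiv ℝ u) f'' p₀ := hdf.hasFDerivAt
  have hevd : ∀ᶠ y in nhds p₀, HasFDerivAt u (fderiv ℝ u y) y := by
    filter_upwards [isOpen_ball.mem_nhds hball] with q hq
    exact (hudiff q hq).hasFDerivAt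
  have hsym : ∀ a b : R2, f'' a b = f'' b a := fun a b =>
    second_derivative_symmetric_of_eventually hevd hf'' a b
  have happ : ∀ z : R2, HasFDerivAt (fun q => fderiv ℝ u q z)
      ((ContinuousLinearMap.apply ℝ ℝ z).comp f'') p₀ := fun z =>
    (ContinuousLinearMap.apply ℝ ℝ z).hasFDerivAt.comp p₀ hf''
  have happ' : ∀ z a : R2, fderiv ℝ (fun q => fderiv ℝ u q z) p₀ a = f'' a z := by
    intro z a
    rw [(happ z).fderiv]
    simp
  set ux := du (e2 0) with huxdef
  set uy := du (e2 1) with huydef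
  have hPDE2 : (1 + uy^2) * f'' (e2 0) (e2 0) - 2*ux*uy*(f'' (e2 1) (e2 0))
      + (1 + ux^2) * f'' (e2 1) (e2 1) = 0 := by
    have h1 := happ' (e2 0) (e2 0)
    have h2 := happ' (e2 0) (e2 1)
    have h3 := happ' (e2 1) (e2 1)
    rw [← h1, ← h2, ← h3]
    rw [huxdef, huydef, hdudef]
    exact hPDE
  -- graph points near p₀ lie in S
  have hΓS : ∀ᶠ q in nhds p₀, Q.symm (toR3 (q 0) (q 1) (u q)) ∈ S := by
    have hcont : ContinuousAt u p₀ := hC2.continuousAt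
    have h1 : ∀ᶠ q in nhds p₀, q ∈ ball p₀ ε := isOpen_ball.eventually_mem hball
    have h2 : ∀ᶠ q in nhds p₀, |u q - u p₀| < ε := by
      have h3 := hcont (Metric.ball_mem_nhds (u p₀) hε)
      filter_upwards [h3] with q hq
      rw [mem_preimage, mem_ball, Real.dist_eq] at hq
      exact hq
    filter_upwards [h1, h2] with q hq1 hq2
    have hprq : pr (toR3 (q 0) (q 1) (u q)) = q := pr_toR3 _ _ _ q rfl rfl
    have hxR : toR3 (q 0) (q 1) (u q) ∈
        {x : R3 | pr x ∈ ball p₀ ε ∧ x = toR3 (x 0) (x 1) (u (pr x)) ∧ |x 2 - Q w 2| < ε} := by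
      refine ⟨?_, ?_, ?_⟩
      · rw [hprq]; exact hq1
      · rw [hprq, toR3_apply0, toR3_apply1]
      · rw [toR3_apply2, ← hu0]; exact hq2
    rw [← hCE] at hxR
    obtain ⟨⟨s', hs'S, hs'x⟩, -⟩ := hxR
    rw [← hs'x, Q.symm_apply_apply]
    exact hs'S
  have hΓp₀ : Q.symm (toR3 (p₀ 0) (p₀ 1) (u p₀)) = w := by
    have he : toR3 (p₀ 0) (p₀ 1) (u p₀) = Q w := by
      rw [hp₀def, pr_apply0, pr_apply1]
      exact hgraphQw.symm
    rw [he, Q.symm_apply_apply]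
  set sh := Real.sinh (6 * w 2 / h) with hshdef
  set ch := Real.cosh (6 * w 2 / h) with hchdef
  set c0 := cF h (w 2) with hc0def
  have key : ∀ v : R2,
      (2*(w 0 - p' 0)*(v 0 * r 0 0 + v 1 * r 0 1 + du v * r 0 2)
       + 2*(w 1 - p' 1)*(v 0 * r 1 0 + v 1 * r 1 1 + du v * r 1 2)
       - 2*c0*((9/8)*sh)*(v 0 * r 2 0 + v 1 * r 2 1 + du v * r 2 2) = 0)
      ∧ 0 ≤ 2*(v 0 * r 0 0 + v 1 * r 0 1 + du v * r 0 2)^2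
          + 2*(v 0 * r 1 0 + v 1 * r 1 1 + du v * r 1 2)^2
          - (2*((9/8)*sh)^2 + 2*c0*((27/(4*h))*ch)) * (v 0 * r 2 0 + v 1 * r 2 1 + du v * r 2 2)^2
          + (2*(w 0 - p' 0)*r 0 2 + 2*(w 1 - p' 1)*r 1 2 - 2*c0*((9/8)*sh)*r 2 2) * f'' v v := by
    intro v
    classical
    set L : ℝ → R2 := fun t => p₀ + t • v with hLdef
    have hL0 : L 0 = p₀ := by simp [hLdef]
    have hLc0 : ∀ t, L t 0 = p₀ 0 + t * v 0 := by
      intro t; simp [hLdef, PiLp.add_apply, PiLp.smul_apply, smul_eq_mul]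
    have hLc1 : ∀ t, L t 1 = p₀ 1 + t * v 1 := by
      intro t; simp [hLdef, PiLp.add_apply, PiLp.smul_apply, smul_eq_mul]
    have hLder : ∀ t, HasDerivAt L v t := by
      intro t
      have h1 : HasDerivAt (fun t : ℝ => t • v) ((1:ℝ) • v) t := (hasDerivAt_id t).smul_const v
      have h2 := h1.const_add p₀
      simpa [hLdef] using h2
    have hLcont : Continuous L := by
      have : ∀ t, HasDerivAt L v t := hLder
      exact continuous_iff_continuousAt.2 (fun t => (this t).continuousAt)
    have hLtend : Filter.Tendsto L (nhds 0) (nhds p₀) := by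
      have := hLcont.continuousAt (x := 0)
      rwa [ContinuousAt, hL0] at this
    have hLball : ∀ᶠ t in nhds 0, L t ∈ ball p₀ ε := hLtend.eventually (isOpen_ball.eventually_mem hball)
    set U : ℝ → ℝ := fun t => u (L t) with hUdef
    set U' : ℝ → ℝ := fun t => fderiv ℝ u (L t) v with hU'def
    have hU : ∀ᶠ t in nhds 0, HasDerivAt U (U' t) t := by
      filter_upwards [hLball] with t ht
      exact ((hudiff _ ht).hasFDerivAt.comp_hasDerivAt t (hLder t))
    have hU'0 : U' 0 = du v := by rw [hU'def]; simp only [hL0, hdudef]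
    have hU2 : HasDerivAt U' (f'' v v) 0 := by
      have h2 : HasFDerivAt (fun q => fderiv ℝ u q v)
          ((ContinuousLinearMap.apply ℝ ℝ v).comp f'') (L 0) := by
        rw [hL0]; exact happ v
      have h3 := h2.comp_hasDerivAt 0 (hLder 0)
      exact h3.congr_deriv (by simp)
    set X : Fin 3 → ℝ → ℝ :=
      fun i t => (p₀ 0 + t * v 0) * r i 0 + (p₀ 1 + t * v 1) * r i 1 + U t * r i 2 with hXdef
    have hU00 : U 0 = u p₀ := by rw [hUdef]; simp only [hL0]
    have hXw : ∀ i, X i 0 = w i := by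
      intro i
      have h2 : w i = (Q.symm (Q w)) i := by rw [Q.symm_apply_apply]
      rw [h2, hQsc]
      have e0 : (Q w) 0 = p₀ 0 := rfl
      have e1 : (Q w) 1 = p₀ 1 := rfl
      rw [e0, e1, ← hu0, hXdef]
      simp [hU00]
    set E : Fin 3 → ℝ := fun i => v 0 * r i 0 + v 1 * r i 1 + du v * r i 2 with hEdef
    set XD : Fin 3 → ℝ → ℝ := fun i t => v 0 * r i 0 + v 1 * r i 1 + U' t * r i 2 with hXDdef
    have hXD0 : ∀ i, XD i 0 = E i := by
      intro i; rw [hXDdef, hEdef]; simp only [hU'0]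
    have hXder : ∀ᶠ t in nhds 0, ∀ i, HasDerivAt (X i) (XD i t) t := by
      filter_upwards [hU] with t ht i
      have h1 : HasDerivAt (fun s => (p₀ 0 + s * v 0) * r i 0) (v 0 * r i 0) t := by
        have := (((hasDerivAt_id t).mul_const (v 0)).const_add (p₀ 0)).mul_const (r i 0)
        exact this.congr_deriv (by ring)
      have h2 : HasDerivAt (fun s => (p₀ 1 + s * v 1) * r i 1) (v 1 * r i 1) t := by
        have := (((hasDerivAt_id t).mul_const (v 1)).const_add (p₀ 1)).mul_const (r i 1)
        exact this.congr_deriv (by ring)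
      have h3 : HasDerivAt (fun s => U s * r i 2) (U' t * r i 2) t := ht.mul_const (r i 2)
      have h4 := (h1.add h2).add h3
      exact h4
    have hXder0 : ∀ i, HasDerivAt (X i) (E i) 0 := by
      intro i
      have h1 := hXder.self_of_nhds i
      rwa [hXD0 i] at h1
    set gv : ℝ → ℝ := fun t => (X 0 t - p' 0)^2 + (X 1 t - p' 1)^2 - (cF h (X 2 t))^2 with hgvdef
    have hgveq : ∀ t, gv t = Fb h p' (Q.symm (toR3 (L t 0) (L t 1) (u (L t)))) := by
      intro t
      rw [hgvdef]
      show _ = Fb h p' _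
      unfold Fb
      rw [hQsc _ 0, hQsc _ 1, hQsc _ 2]
      rw [toR3_apply0, toR3_apply1, toR3_apply2, hLc0, hLc1]
    have hlocmin : IsLocalMin gv 0 := by
      have hgv0 : gv 0 = 0 := by
        rw [hgveq 0, hL0, hΓp₀]
        exact h0
      have hev : ∀ᶠ t in nhds 0, gv 0 ≤ gv t := by
        have hSt := hLtend.eventually hΓS
        filter_upwards [hSt] with t ht
        rw [hgv0, hgveq t]
        exact hge _ ht
      exact hev
    set Hvv := f'' v v with hHvvdef
    have hXD' : ∀ i, HasDerivAt (XD i) (Hvv * r i 2) 0 := by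
      intro i
      have h1 := (hU2.mul_const (r i 2)).const_add (v 0 * r i 0 + v 1 * r i 1)
      exact h1
    clear_value X XD U U'
    set gv' : ℝ → ℝ := fun t =>
      2*(X 0 t - p' 0)*(XD 0 t) + 2*(X 1 t - p' 1)*(XD 1 t)
      - 2 * cF h (X 2 t) * ((9/8)*Real.sinh (6 * X 2 t / h)) * (XD 2 t) with hgv'def
    have hgv' : ∀ᶠ t in nhds 0, HasDerivAt gv (gv' t) t := by
      filter_upwards [hXder] with t ht
      have h1 : HasDerivAt (fun s => (X 0 s - p' 0)^2) (2*(X 0 t - p' 0)*(XD 0 t)) t := by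
        have := ((ht 0).sub_const (p' 0)).pow 2
        exact this.congr_deriv (by ring)
      have h2 : HasDerivAt (fun s => (X 1 s - p' 1)^2) (2*(X 1 t - p' 1)*(XD 1 t)) t := by
        have := ((ht 1).sub_const (p' 1)).pow 2
        exact this.congr_deriv (by ring)
      have hc := (hasDerivAt_cF h (X 2 t)).comp t (ht 2)
      have h3 : HasDerivAt (fun s => (cF h (X 2 s))^2)
          (2 * cF h (X 2 t) * ((9/8)*Real.sinh (6 * X 2 t / h)) * (XD 2 t)) t := by
        have := hc.pow 2
        exact this.congr_deriv (by simp only [Function.comp_apply]; ring)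
      have h4 := (h1.add h2).sub h3
      exact h4
    -- second derivative at 0
    have hA : HasDerivAt (fun t => 2*(X 0 t - p' 0)*(XD 0 t))
        (2*(E 0)*(E 0) + 2*(X 0 0 - p' 0)*(Hvv * r 0 2)) 0 := by
      have hc1 : HasDerivAt (fun t => 2*(X 0 t - p' 0)) (2*(E 0)) 0 :=
        ((hXder0 0).sub_const (p' 0)).const_mul 2
      have := hc1.mul (hXD' 0)
      rw [hXD0 0] at this
      exact this.congr_deriv (by ring)
    have hB : HasDerivAt (fun t => 2*(X 1 t - p' 1)*(XD 1 t))
        (2*(E 1)*(E 1) + 2*(X 1 0 - p' 1)*(Hvv * r 1 2)) 0 := by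
      have hc1 : HasDerivAt (fun t => 2*(X 1 t - p' 1)) (2*(E 1)) 0 :=
        ((hXder0 1).sub_const (p' 1)).const_mul 2
      have := hc1.mul (hXD' 1)
      rw [hXD0 1] at this
      exact this.congr_deriv (by ring)
    have hsinhd : HasDerivAt (fun t => (9/8)*Real.sinh (6 * X 2 t / h))
        ((27/(4*h))*Real.cosh (6 * X 2 0 / h) * E 2) 0 :=
      (hasDerivAt_sF h hne (X 2 0)).comp 0 (hXder0 2)
    have hcF0 : HasDerivAt (fun t => cF h (X 2 t)) ((9/8)*Real.sinh (6 * X 2 0 / h) * E 2) 0 :=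
      (hasDerivAt_cF h (X 2 0)).comp 0 (hXder0 2)
    have hP : HasDerivAt (fun t => 2 * cF h (X 2 t) * ((9/8)*Real.sinh (6 * X 2 t / h)))
        (2*((9/8)*Real.sinh (6 * X 2 0 / h) * E 2) * ((9/8)*Real.sinh (6 * X 2 0 / h))
          + 2 * cF h (X 2 0) * ((27/(4*h))*Real.cosh (6 * X 2 0 / h) * E 2)) 0 := by
      have := (hcF0.const_mul 2).mul hsinhd
      exact this.congr_deriv (by ring)
    have hC : HasDerivAt (fun t => 2 * cF h (X 2 t) * ((9/8)*Real.sinh (6 * X 2 t / h)) * (XD 2 t))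
        ((2*((9/8)*Real.sinh (6 * X 2 0 / h) * E 2) * ((9/8)*Real.sinh (6 * X 2 0 / h))
          + 2 * cF h (X 2 0) * ((27/(4*h))*Real.cosh (6 * X 2 0 / h) * E 2)) * E 2
         + 2 * cF h (X 2 0) * ((9/8)*Real.sinh (6 * X 2 0 / h)) * (Hvv * r 2 2)) 0 := by
      have := hP.mul (hXD' 2)
      rw [hXD0 2] at this
      exact this
    have hG2 : HasDerivAt gv'
        (2*(E 0)*(E 0) + 2*(X 0 0 - p' 0)*(Hvv * r 0 2)
         + (2*(E 1)*(E 1) + 2*(X 1 0 - p' 1)*(Hvv * r 1 2))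
         - ((2*((9/8)*Real.sinh (6 * X 2 0 / h) * E 2) * ((9/8)*Real.sinh (6 * X 2 0 / h))
             + 2 * cF h (X 2 0) * ((27/(4*h))*Real.cosh (6 * X 2 0 / h) * E 2)) * E 2
            + 2 * cF h (X 2 0) * ((9/8)*Real.sinh (6 * X 2 0 / h)) * (Hvv * r 2 2))) 0 :=
      (hA.add hB).sub hC
    have hfirst : gv' 0 = 0 := hlocmin.hasDerivAt_eq_zero (hgv'.self_of_nhds)
    have hsecond := sd_test gv gv' _ hlocmin hgv' hG2
    -- rewrite in terms of w
    rw [hgv'def] at hfirst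
    simp only [hXD0, hXw] at hfirst hsecond
    constructor
    · rw [hEdef] at hfirst
      rw [← hshdef, ← hc0def] at hfirst
      linarith [hfirst]
    · rw [hEdef] at hsecond
      rw [← hshdef, ← hchdef, ← hc0def] at hsecond
      rw [hHvvdef] at hsecond
      nlinarith [hsecond]
  -- ===== final algebra =====
  have he00 : (e2 0) 0 = 1 := by simp [e2, EuclideanSpace.single_apply]
  have he01 : (e2 0) 1 = 0 := by simp [e2, EuclideanSpace.single_apply]
  have he10 : (e2 1) 0 = 0 := by simp [e2, EuclideanSpace.single_apply]
  have he11 : (e2 1) 1 = 1 := by simp [e2, EuclideanSpace.single_apply]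
  set Pv : R2 := (-uy) • e2 0 + ux • e2 1 with hPvdef
  have hPv0 : Pv 0 = -uy := by
    rw [hPvdef]
    simp [PiLp.add_apply, PiLp.smul_apply, smul_eq_mul, he00, he10]
  have hPv1 : Pv 1 = ux := by
    rw [hPvdef]
    simp [PiLp.add_apply, PiLp.smul_apply, smul_eq_mul, he01, he11]
  have hduP : du Pv = 0 := by
    rw [hPvdef, map_add, map_smul, map_smul, smul_eq_mul, smul_eq_mul, ← huxdef, ← huydef]
    ring
  have hfP : f'' Pv Pv = uy^2 * f'' (e2 0) (e2 0) - ux*uy*(f'' (e2 0) (e2 1))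
      - ux*uy*(f'' (e2 1) (e2 0)) + ux^2 * f'' (e2 1) (e2 1) := by
    rw [hPvdef]
    simp only [map_add, map_smul, ContinuousLinearMap.add_apply, ContinuousLinearMap.smul_apply,
      smul_eq_mul, ← huxdef, ← huydef]
    ring
  have hHsum : f'' (e2 0) (e2 0) + f'' (e2 1) (e2 1) + f'' Pv Pv = 0 := by
    rw [hfP]
    linear_combination hPDE2 - ux*uy*(hsym (e2 0) (e2 1))
  obtain ⟨k0a, k0b⟩ := key (e2 0)
  obtain ⟨k1a, k1b⟩ := key (e2 1)
  obtain ⟨kPa, kPb⟩ := key Pv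
  rw [he00, he01, ← huxdef] at k0a k0b
  rw [he10, he11, ← huydef] at k1a k1b
  rw [hPv0, hPv1, hduP] at kPa kPb
  -- orthogonality scalars
  have hr00 : r 0 0 * r 0 0 + r 0 1 * r 0 1 + r 0 2 * r 0 2 = 1 := by simpa using hrow 0 0
  have hr11 : r 1 0 * r 1 0 + r 1 1 * r 1 1 + r 1 2 * r 1 2 = 1 := by simpa using hrow 1 1
  have hr22 : r 2 0 * r 2 0 + r 2 1 * r 2 1 + r 2 2 * r 2 2 = 1 := by simpa using hrow 2 2
  have hr01 : r 0 0 * r 1 0 + r 0 1 * r 1 1 + r 0 2 * r 1 2 = 0 := by simpa using hrow 0 1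
  have hr02 : r 0 0 * r 2 0 + r 0 1 * r 2 1 + r 0 2 * r 2 2 = 0 := by simpa using hrow 0 2
  have hr12 : r 1 0 * r 2 0 + r 1 1 * r 2 1 + r 1 2 * r 2 2 = 0 := by simpa using hrow 1 2
  have hc00 : r 0 0 * r 0 0 + r 1 0 * r 1 0 + r 2 0 * r 2 0 = 1 := by simpa using hcol 0 0
  have hc11 : r 0 1 * r 0 1 + r 1 1 * r 1 1 + r 2 1 * r 2 1 = 1 := by simpa using hcol 1 1
  have hc22 : r 0 2 * r 0 2 + r 1 2 * r 1 2 + r 2 2 * r 2 2 = 1 := by simpa using hcol 2 2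
  have hc01 : r 0 0 * r 0 1 + r 1 0 * r 1 1 + r 2 0 * r 2 1 = 0 := by simpa using hcol 0 1
  have hc02 : r 0 0 * r 0 2 + r 1 0 * r 1 2 + r 2 0 * r 2 2 = 0 := by simpa using hcol 0 2
  have hc12 : r 0 1 * r 0 2 + r 1 1 * r 1 2 + r 2 1 * r 2 2 = 0 := by simpa using hcol 1 2
  -- touching identity
  have h0' : (w 0 - p' 0)^2 + (w 1 - p' 1)^2 - c0^2 = 0 := by
    rw [hc0def]; exact h0
  have hchsh : ch^2 - sh^2 = 1 := by
    rw [hchdef, hshdef]; exact Real.cosh_sq_sub_sinh_sq _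
  have hc0ch : c0 = 3*h/16*ch := by rw [hc0def, hchdef]; rfl
  have hc0pos : 0 < c0 := by rw [hc0def]; exact cF_pos h (w 2) hh
  have hCC : 2*c0*((27/(4*h))*ch) = (81/32)*ch^2 := by
    rw [hc0ch]; field_simp; ring
  -- gradient components
  have hs0 : (2*(w 0 - p' 0)) * r 0 0 + (2*(w 1 - p' 1)) * r 1 0 + (-(2*c0*((9/8)*sh))) * r 2 0
      + ux * ((2*(w 0 - p' 0)) * r 0 2 + (2*(w 1 - p' 1)) * r 1 2 + (-(2*c0*((9/8)*sh))) * r 2 2)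
      = 0 := by linear_combination k0a
  have hs1 : (2*(w 0 - p' 0)) * r 0 1 + (2*(w 1 - p' 1)) * r 1 1 + (-(2*c0*((9/8)*sh))) * r 2 1
      + uy * ((2*(w 0 - p' 0)) * r 0 2 + (2*(w 1 - p' 1)) * r 1 2 + (-(2*c0*((9/8)*sh))) * r 2 2)
      = 0 := by linear_combination k1a
  set G0 := 2*(w 0 - p' 0) with hG0def
  set G1 := 2*(w 1 - p' 1) with hG1def
  set G2 := -(2*c0*((9/8)*sh)) with hG2def
  set s0 := G0 * r 0 0 + G1 * r 1 0 + G2 * r 2 0 with hs0def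
  set s1 := G0 * r 0 1 + G1 * r 1 1 + G2 * r 2 1 with hs1def
  set s2 := G0 * r 0 2 + G1 * r 1 2 + G2 * r 2 2 with hs2def
  have hsnorm : s0^2 + s1^2 + s2^2 = G0^2 + G1^2 + G2^2 := by
    rw [hs0def, hs1def, hs2def]
    linear_combination (G0^2)*hr00 + (G1^2)*hr11 + (G2^2)*hr22 + (2*G0*G1)*hr01
      + (2*G0*G2)*hr02 + (2*G1*G2)*hr12
  have hsG2 : s0 * r 2 0 + s1 * r 2 1 + s2 * r 2 2 = G2 := by
    rw [hs0def, hs1def, hs2def]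
    linear_combination G0*hr02 + G1*hr12 + G2*hr22
  set tt := r 2 2 - ux * r 2 0 - uy * r 2 1 with httdef
  have hT2 : G2 = s2 * tt := by
    rw [httdef]
    linear_combination (-1)*hsG2 + r 2 0 * hs0 + r 2 1 * hs1
  have hs2N : s2^2*(1+ux^2+uy^2) = G0^2+G1^2+G2^2 := by
    linear_combination hsnorm - (s0 - ux*s2)*hs0 - (s1 - uy*s2)*hs1
  have hF1 : G0^2 + G1^2 = 4*c0^2 := by
    rw [hG0def, hG1def]
    linear_combination 4*h0'
  have hG2sq : G2^2 = 4*c0^2*((9/8)*sh)^2 := by rw [hG2def]; ring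
  have hs2pos : 0 < s2^2 := by
    nlinarith only [hs2N, hF1, hG2sq, sq_nonneg s2, sq_nonneg ux, sq_nonneg uy, hc0pos,
      sq_nonneg ((9/8)*sh), sq_nonneg (s2*ux), sq_nonneg (s2*uy)]
  -- column sums
  have hS0 : (r 0 0 + ux*r 0 2)^2 + (r 1 0 + ux*r 1 2)^2 + (r 2 0 + ux*r 2 2)^2 = 1 + ux^2 := by
    linear_combination hc00 + 2*ux*hc02 + ux^2*hc22
  have hS1 : (r 0 1 + uy*r 0 2)^2 + (r 1 1 + uy*r 1 2)^2 + (r 2 1 + uy*r 2 2)^2 = 1 + uy^2 := by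
    linear_combination hc11 + 2*uy*hc12 + uy^2*hc22
  have hSP : (-uy*r 0 0 + ux*r 0 1)^2 + (-uy*r 1 0 + ux*r 1 1)^2 + (-uy*r 2 0 + ux*r 2 1)^2
      = uy^2 + ux^2 := by
    linear_combination uy^2*hc00 - 2*ux*uy*hc01 + ux^2*hc11
  -- total inequality
  have hsum := add_nonneg (add_nonneg k0b k1b) kPb
  set KK := (r 2 0 + ux*r 2 2)^2 + (r 2 1 + uy*r 2 2)^2 + (-uy*r 2 0 + ux*r 2 1)^2 with hKKdef
  have hTOT : 0 ≤ 4*(1+ux^2+uy^2) - (2 + 2*((9/8)*sh)^2 + 2*c0*((27/(4*h))*ch)) * KK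
      + s2 * (f'' (e2 0) (e2 0) + f'' (e2 1) (e2 1) + f'' Pv Pv) := by
    have hE : 4*(1+ux^2+uy^2) - (2 + 2*((9/8)*sh)^2 + 2*c0*((27/(4*h))*ch)) * KK
        + s2 * (f'' (e2 0) (e2 0) + f'' (e2 1) (e2 1) + f'' Pv Pv)
        = (2*(1 * r 0 0 + 0 * r 0 1 + ux * r 0 2)^2
          + 2*(1 * r 1 0 + 0 * r 1 1 + ux * r 1 2)^2
          - (2*((9/8)*sh)^2 + 2*c0*((27/(4*h))*ch)) * (1 * r 2 0 + 0 * r 2 1 + ux * r 2 2)^2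
          + (2*(w 0 - p' 0)*r 0 2 + 2*(w 1 - p' 1)*r 1 2 - 2*c0*((9/8)*sh)*r 2 2) * f'' (e2 0) (e2 0))
        + (2*(0 * r 0 0 + 1 * r 0 1 + uy * r 0 2)^2
          + 2*(0 * r 1 0 + 1 * r 1 1 + uy * r 1 2)^2
          - (2*((9/8)*sh)^2 + 2*c0*((27/(4*h))*ch)) * (0 * r 2 0 + 1 * r 2 1 + uy * r 2 2)^2
          + (2*(w 0 - p' 0)*r 0 2 + 2*(w 1 - p' 1)*r 1 2 - 2*c0*((9/8)*sh)*r 2 2) * f'' (e2 1) (e2 1))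
        + (2*(-uy * r 0 0 + ux * r 0 1 + 0 * r 0 2)^2
          + 2*(-uy * r 1 0 + ux * r 1 1 + 0 * r 1 2)^2
          - (2*((9/8)*sh)^2 + 2*c0*((27/(4*h))*ch)) * (-uy * r 2 0 + ux * r 2 1 + 0 * r 2 2)^2
          + (2*(w 0 - p' 0)*r 0 2 + 2*(w 1 - p' 1)*r 1 2 - 2*c0*((9/8)*sh)*r 2 2) * f'' Pv Pv) := by
      rw [hKKdef, hs2def, hG0def, hG1def, hG2def]
      linear_combination -2*hS0 - 2*hS1 - 2*hSP
    rw [hE]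
    exact hsum
  rw [hHsum, mul_zero, add_zero] at hTOT
  have hKs2 : KK * s2^2 = 4*c0^2 := by
    rw [hKKdef]
    linear_combination (s2^2*(1+ux^2+uy^2))*hr22 + hs2N + (tt*s2 + G2)*hT2 + hF1
  have hm := mul_nonneg hTOT (sq_nonneg s2)
  have hmE : (4*(1+ux^2+uy^2) - (2 + 2*((9/8)*sh)^2 + 2*c0*((27/(4*h))*ch)) * KK) * s2^2
      = 4*(G0^2+G1^2+G2^2) - (2 + 2*((9/8)*sh)^2 + (81/32)*ch^2) * (4*c0^2) := by
    linear_combination 4*hs2N - (2 + 2*((9/8)*sh)^2 + 2*c0*((27/(4*h))*ch))*hKs2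
      - (4*c0^2)*hCC
  rw [hmE] at hm
  nlinarith only [hm, hF1, hG2sq, hchsh, hc0pos, sq_nonneg sh, sq_nonneg ch]

set_option maxHeartbeats 1600000 in
/-- The vertical projection of a compact embedded minimal surface in a narrow slab
cannot meet any unbounded component of the complement of the `h/4`-neighborhood of the
projection of its boundary. -/
theorem stmt14 (S bd : Set R3) (hcpt : IsCompact S) (hmin : IsMinimalSurface S bd)
    (h βA : ℝ) (hh : 0 < h) (hβA : 0 < βA)
    (hβA1 : ∀ y : R3, {x : R3 | |x 2 - y 2| ≤ 2 * βA * h} \ ball y (h / 8) ⊆ Ncone y)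
    (hβA2 : ∀ y : R3, {x : R3 | fCat y x = 3 * h / 16} ∩
      {x : R3 | |x 2 - y 2| ≤ 2 * βA * h} ⊆ ball y (7 * h / 32))
    (hslab : S ⊆ {x : R3 | |x 2| ≤ 2 * βA * h})
    (E : Set R2) (p : R2) (hp : p ∈ (Tub (h / 4) (pr '' bd))ᶜ)
    (hE : E = connectedComponentIn (Tub (h / 4) (pr '' bd))ᶜ p)
    (hunb : ¬ Bornology.IsBounded E) :
    pr '' S ∩ E = ∅ := by
  rw [Set.eq_empty_iff_forall_notMem]
  intro q hq
  obtain ⟨⟨z₀, hz₀S, hz₀pr⟩, hqE⟩ := hq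
  -- sin²θ₀ ≤ 1
  have hs1 : sinSqθ₀ ≤ 1 := by
    unfold sinSqθ₀
    have hc := Real.one_le_cosh tcrit
    rw [div_le_one (by nlinarith [sq_nonneg tcrit])]
    nlinarith [sq_nonneg tcrit]
  -- βA < 1/16
  have hβA16 : βA < 1/16 := by
    by_contra hcon
    push_neg at hcon
    have h02 : (0:R3) 2 = 0 := by simp
    have hd : dist (toR3 0 0 (h/8)) (0:R3) ^ 2 = (h/8)^2 := by
      rw [dist_R3_sq]
      have h00 : (0:R3) 0 = 0 := by simp
      have h01 : (0:R3) 1 = 0 := by simp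
      rw [toR3_apply0, toR3_apply1, toR3_apply2, h00, h01, h02]
      ring
    have hmem : toR3 0 0 (h/8) ∈ {x : R3 | |x 2 - (0:R3) 2| ≤ 2*βA*h} \ ball (0:R3) (h/8) := by
      constructor
      · show |toR3 0 0 (h/8) 2 - (0:R3) 2| ≤ 2*βA*h
        rw [toR3_apply2, h02, sub_zero, abs_of_nonneg (by positivity)]
        nlinarith
      · intro hball
        rw [mem_ball] at hball
        nlinarith [dist_nonneg (x := toR3 0 0 (h/8)) (y := (0:R3)), hd, hball, hh]
    have hN := hβA1 0 hmem
    have hlt := hN.2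
    rw [toR3_apply2, h02, sub_zero, hd] at hlt
    nlinarith [hs1, sq_nonneg (h/8)]
  have hEpre : IsPreconnected E := by
    rw [hE]; exact isPreconnected_connectedComponentIn
  have hEsub : E ⊆ (Tub (h / 4) (pr '' bd))ᶜ := by
    rw [hE]; exact connectedComponentIn_subset _ _
  have hcfS : ∀ x ∈ S, cF h (x 2) < h/4 := fun x hx =>
    cF_lt h βA (x 2) hh hβA hβA16 (hslab hx)
  have hcont3 : ∀ i : Fin 3, Continuous (fun x : R3 => x i) := fun i =>
    (continuous_apply i).comp (PiLp.continuousLinearEquiv 2 ℝ _).continuous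
  have hcont2 : ∀ i : Fin 2, Continuous (fun p : R2 => p i) := fun i =>
    (continuous_apply i).comp (PiLp.continuousLinearEquiv 2 ℝ _).continuous
  set A := {p'' : R2 | ∀ x ∈ S, 0 < Fb h p'' x} with hAdef
  set B := ⋃ x ∈ S, {p'' : R2 | Fb h p'' x < 0} with hBdef
  have hAopen : IsOpen A := by
    rw [Metric.isOpen_iff]
    intro p'' hp''
    rcases S.eq_empty_or_nonempty with hSe | hSne
    · refine ⟨1, one_pos, ?_⟩
      intro p₂ _
      show ∀ x ∈ S, 0 < Fb h p₂ x
      intro x hx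
      rw [hSe] at hx
      exact absurd hx (notMem_empty x)
    · have hFcont : ContinuousOn (fun x => Fb h p'' x) S := by
        apply Continuous.continuousOn
        unfold Fb cF
        exact ((((hcont3 0).sub continuous_const).pow 2).add
          (((hcont3 1).sub continuous_const).pow 2)).sub
          ((continuous_const.mul (Real.continuous_cosh.comp
            ((continuous_const.mul (hcont3 2)).div_const h))).pow 2)
      obtain ⟨x₀, hx₀S, hx₀min⟩ := hcpt.exists_isMinOn hSne hFcont
      set m := Fb h p'' x₀ with hmdef
      have hm : 0 < m := hp'' x₀ hx₀S
      refine ⟨min 1 (m/(h+3)), by positivity, ?_⟩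
      intro p₂ hp₂
      show ∀ x ∈ S, 0 < Fb h p₂ x
      intro x hx
      by_contra hle
      push_neg at hle
      have hδ : dist p₂ p'' < min 1 (m/(h+3)) := mem_ball.1 hp₂
      have h1 : dist (pr x) p₂ ≤ cF h (x 2) := by
        have h5 := Fb_dist h p₂ x
        nlinarith [dist_nonneg (x := pr x) (y := p₂), cF_pos h (x 2) hh]
      have h2 : dist (pr x) p'' ≤ dist (pr x) p₂ + dist p₂ p'' := dist_triangle _ _ _
      have h3 : m ≤ Fb h p'' x := hx₀min hx
      have h4 := Fb_dist h p'' x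
      have hcf := hcfS x hx
      have hδ1 : dist p₂ p'' ≤ 1 := le_trans hδ.le (min_le_left _ _)
      have hδ2 : dist p₂ p'' * (h+3) ≤ m := by
        have := le_trans hδ.le (min_le_right _ _)
        exact (le_div_iff₀ (by positivity)).1 this
      nlinarith [dist_nonneg (x := pr x) (y := p₂), dist_nonneg (x := p₂) (y := p''),
        dist_nonneg (x := pr x) (y := p''), cF_pos h (x 2) hh]
  have hBopen : IsOpen B := by
    apply isOpen_biUnion
    intro x hx
    apply isOpen_lt _ continuous_const
    unfold Fb
    exact (((continuous_const.sub (hcont2 0)).pow 2).add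
      ((continuous_const.sub (hcont2 1)).pow 2)).sub continuous_const
  have hcover : E ⊆ A ∪ B := by
    intro p'' hp''
    by_cases hA' : p'' ∈ A
    · exact Or.inl hA'
    by_cases hB' : p'' ∈ B
    · exact Or.inr hB'
    exfalso
    rw [hAdef, mem_setOf_eq] at hA'
    push_neg at hA'
    obtain ⟨w, hwS, hwle⟩ := hA'
    have hge0 : ∀ x ∈ S, 0 ≤ Fb h p'' x := by
      intro x hx
      by_contra hxneg
      push_neg at hxneg
      exact hB' (mem_biUnion hx hxneg)
    have hFw0 : Fb h p'' w = 0 := le_antisymm hwle (hge0 w hwS)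
    have hdistw : dist p'' (pr w) < h/4 := by
      have h5 := Fb_dist h p'' w
      have hcf := hcfS w hwS
      have hcp := cF_pos h (w 2) hh
      rw [dist_comm]
      nlinarith [dist_nonneg (x := pr w) (y := p'')]
    have hwbd : w ∉ bd := by
      intro hbd
      apply hEsub hp''
      show p'' ∈ Tub (h / 4) (pr '' bd)
      unfold Tub
      exact Metric.mem_thickening_iff.2 ⟨pr w, ⟨w, hbd, rfl⟩, hdistw⟩
    exact touching h βA hh S bd hmin p'' hge0 w hwS hwbd hFw0
  have hqB : q ∈ B := by
    have hlt : Fb h q z₀ < 0 := by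
      have h5 := Fb_dist h q z₀
      rw [hz₀pr, dist_self] at h5
      nlinarith [cF_pos h (z₀ 2) hh]
    exact mem_biUnion hz₀S hlt
  have hEA : (E ∩ A).Nonempty := by
    obtain ⟨R, hR⟩ := hcpt.isBounded.subset_closedBall 0
    have hfar : ∃ p₁ ∈ E, R + h < dist p₁ 0 := by
      by_contra hcon
      push_neg at hcon
      exact hunb ((Metric.isBounded_iff_subset_closedBall 0).2 ⟨R + h, fun p hp => by
        simpa [Metric.mem_closedBall] using hcon p hp⟩)
    obtain ⟨p₁, hp₁E, hp₁far⟩ := hfar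
    refine ⟨p₁, hp₁E, ?_⟩
    show ∀ x ∈ S, 0 < Fb h p₁ x
    intro x hx
    have hxR : dist x 0 ≤ R := by simpa [Metric.mem_closedBall] using hR hx
    have hprx : dist (pr x) (0:R2) ≤ dist x (0:R3) := by
      have h2 := dist_pr_sq x (0:R2)
      have h3 := dist_R3_sq x (0:R3)
      have h00 : (0:R2) 0 = 0 := by simp
      have h01 : (0:R2) 1 = 0 := by simp
      have g0 : (0:R3) 0 = 0 := by simp
      have g1 : (0:R3) 1 = 0 := by simp
      have g2 : (0:R3) 2 = 0 := by simp
      rw [h00, h01] at h2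
      rw [g0, g1, g2] at h3
      nlinarith [dist_nonneg (x := pr x) (y := (0:R2)), dist_nonneg (x := x) (y := (0:R3)),
        sq_nonneg (x 2)]
    have htri : dist p₁ 0 ≤ dist p₁ (pr x) + dist (pr x) 0 := dist_triangle _ _ _
    have hfarx : h < dist p₁ (pr x) := by linarith
    have h5 := Fb_dist h p₁ x
    have hcf := hcfS x hx
    have hcp := cF_pos h (x 2) hh
    have hcm : dist (pr x) p₁ = dist p₁ (pr x) := dist_comm _ _
    nlinarith [dist_nonneg (x := pr x) (y := p₁)]
  obtain ⟨p₃, hp₃E, hp₃A, hp₃B⟩ := hEpre A B hAopen hBopen hcover hEA ⟨q, hqE, hqB⟩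
  rw [hBdef, mem_iUnion₂] at hp₃B
  obtain ⟨x, hxS, hxlt⟩ := hp₃B
  have := hp₃A x hxS
  rw [mem_setOf_eq] at hxlt
  linarith


end
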